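/- Let $\xi$ be a transcendental real number, $n$ a positive integer, and $(P_i)_{i \geq 0}$ a sequence of minimal polynomials associated to $n$ and $\xi$. For each $i \geq 0$, the set $\{P_i, P_{i+1}\}$ forms a $\mathbb{Z}$-basis of the lattice $V_i \cap \mathbb{Z}[X]_{\leq n}$, where $V_i$ is the real span of $P_i$ and $P_{i+1}$. -/

import Mathlib

/-
Consecutive minimal polynomials `A = P i`, `B = P (i + 1)` satisfy `H(A) < H(B)` and
`|B(ξ)| < |A(ξ)|`. If `B` were a real multiple `c A`, the second inequality would force `|c| < 1`
and hence `H(B) ≤ H(A)`, so `A, B` are independent. If an integer polynomial `Q` lies in their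
real span, write `Q = s A + t B` and subtract the rounded combination: the remainder
`R = u A + v B`, `|u|, |v| ≤ 1/2`, has `|R(ξ)| < |A(ξ)|` and `H(R) < H(B)`, which contradicts
the minimality of `B` unless `R = 0`.
-/

open Polynomial

/-- Naive height of an integer polynomial, as a real number. -/
noncomputable def heightZ (P : Polynomial ℤ) : ℝ := ⨆ i : ℕ, |(P.coeff i : ℝ)|

/-- The real polynomial obtained from an integer polynomial. -/
noncomputable def toR (P : Polynomial ℤ) : Polynomial ℝ := P.map (Int.castRingHom ℝ)

/-- A sequence of minimal polynomials associated to `n` and `ξ`. -/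
def IsMinimalSeq (n : ℕ) (ξ : ℝ) (P : ℕ → Polynomial ℤ) : Prop :=
  (∀ i, P i ≠ 0) ∧ (∀ i, (P i).natDegree ≤ n) ∧
  (∀ i, heightZ (P i) < heightZ (P (i + 1))) ∧
  (∀ i, |Polynomial.aeval ξ (P (i + 1))| < |Polynomial.aeval ξ (P i)|) ∧
  (∀ i, ∀ Q : Polynomial ℤ, Q ≠ 0 → Q.natDegree ≤ n →
    |Polynomial.aeval ξ Q| < |Polynomial.aeval ξ (P i)| → heightZ (P (i + 1)) ≤ heightZ Q)

lemma bddAbove_range_abs_coeff (P : ℤ[X]) : BddAbove (Set.range fun j => |(P.coeff j : ℝ)|) := by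
  have h := (P.finite_range_coeff.image fun a : ℤ => |(a : ℝ)|).bddAbove
  rwa [← Set.range_comp] at h

lemma abs_coeff_le_heightZ (P : ℤ[X]) (j : ℕ) : |(P.coeff j : ℝ)| ≤ heightZ P :=
  le_ciSup (bddAbove_range_abs_coeff P) j

lemma heightZ_nonneg (P : ℤ[X]) : 0 ≤ heightZ P :=
  (abs_nonneg _).trans (abs_coeff_le_heightZ P 0)

lemma coeff_toR (P : ℤ[X]) (j : ℕ) : (toR P).coeff j = P.coeff j :=
  coeff_map _ _

lemma aeval_eq_eval_toR (ξ : ℝ) (P : ℤ[X]) : aeval ξ P = (toR P).eval ξ := by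
  simp [toR, aeval_def, eval_map]

lemma natDegree_toR (P : ℤ[X]) : (toR P).natDegree = P.natDegree :=
  natDegree_map_eq_of_injective (RingHom.injective_int _) P

lemma abs_mul_add_mul_le (u v x y : ℝ) : |u * x + v * y| ≤ |u| * |x| + |v| * |y| := by
  rw [← abs_mul, ← abs_mul]; exact abs_add_le _ _

lemma heightZ_le_of_toR_eq {R A B : ℤ[X]} {u v : ℝ} (h : toR R = u • toR A + v • toR B) :
    heightZ R ≤ |u| * heightZ A + |v| * heightZ B := by
  refine ciSup_le fun j => ?_
  have hj : (R.coeff j : ℝ) = u * A.coeff j + v * B.coeff j := by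
    simpa [coeff_toR] using congrArg (coeff · j) h
  calc |(R.coeff j : ℝ)| ≤ |u| * |(A.coeff j : ℝ)| + |v| * |(B.coeff j : ℝ)| :=
        hj ▸ abs_mul_add_mul_le _ _ _ _
    _ ≤ |u| * heightZ A + |v| * heightZ B := by
        gcongr <;> exact abs_coeff_le_heightZ _ _

lemma aeval_eq_of_toR_eq (ξ : ℝ) {R A B : ℤ[X]} {u v : ℝ} (h : toR R = u • toR A + v • toR B) :
    aeval ξ R = u * aeval ξ A + v * aeval ξ B := by
  simp only [aeval_eq_eval_toR, h, eval_add, eval_smul, smul_eq_mul]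

lemma linearIndependent_toR_pair {ξ : ℝ} {A B : ℤ[X]} (hH : heightZ A < heightZ B)
    (hev : |aeval ξ B| < |aeval ξ A|) : LinearIndependent ℝ ![toR A, toR B] := by
  have hA : toR A ≠ 0 := by
    intro h
    rw [aeval_eq_eval_toR ξ A, h, eval_zero, abs_zero] at hev
    exact (abs_nonneg _).not_gt hev
  refine (LinearIndependent.pair_iff' hA).2 fun c hc => ?_
  have hB : toR B = c • toR A + (0 : ℝ) • toR A := by rw [hc, zero_smul, add_zero]
  have hc1 : |c| < 1 := by
    rw [aeval_eq_of_toR_eq ξ hB, zero_mul, add_zero, abs_mul] at hev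
    exact lt_of_mul_lt_mul_right (hev.trans_eq (one_mul _).symm) (abs_nonneg _)
  have hBA := heightZ_le_of_toR_eq hB
  rw [abs_zero, zero_mul, add_zero] at hBA
  linarith [mul_le_of_le_one_left (heightZ_nonneg A) hc1.le]

lemma natDegree_le_of_toR_eq {n : ℕ} {R A B : ℤ[X]} {u v : ℝ} (hA : A.natDegree ≤ n)
    (hB : B.natDegree ≤ n) (h : toR R = u • toR A + v • toR B) : R.natDegree ≤ n := by
  rw [← natDegree_toR, h]
  refine natDegree_add_le_of_degree_le ((natDegree_smul_le _ _).trans ?_)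
    ((natDegree_smul_le _ _).trans ?_) <;> rwa [natDegree_toR]

structure IsMinimalPair (n : ℕ) (ξ : ℝ) (A B : ℤ[X]) : Prop where
  natDegree_left_le : A.natDegree ≤ n
  natDegree_right_le : B.natDegree ≤ n
  heightZ_lt : heightZ A < heightZ B
  abs_aeval_lt : |aeval ξ B| < |aeval ξ A|
  heightZ_le_of_abs_aeval_lt : ∀ R : ℤ[X], R ≠ 0 → R.natDegree ≤ n →
    |aeval ξ R| < |aeval ξ A| → heightZ B ≤ heightZ R

lemma IsMinimalSeq.isMinimalPair {n : ℕ} {ξ : ℝ} {P : ℕ → ℤ[X]} (hP : IsMinimalSeq n ξ P)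
    (i : ℕ) : IsMinimalPair n ξ (P i) (P (i + 1)) :=
  let ⟨_, hdeg, hH, hev, hmin⟩ := hP
  ⟨hdeg i, hdeg (i + 1), hH i, hev i, hmin i⟩

namespace IsMinimalPair

variable {n : ℕ} {ξ : ℝ} {A B : ℤ[X]}

lemma eq_zero_of_toR_eq (h : IsMinimalPair n ξ A B) {R : ℤ[X]} {u v : ℝ}
    (hR : toR R = u • toR A + v • toR B) (hu : |u| ≤ 1 / 2) (hv : |v| ≤ 1 / 2) : R = 0 := by
  by_contra hR0
  have hev : |aeval ξ R| < |aeval ξ A| := by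
    rw [aeval_eq_of_toR_eq ξ hR]
    calc |u * aeval ξ A + v * aeval ξ B| ≤ |u| * |aeval ξ A| + |v| * |aeval ξ B| :=
          abs_mul_add_mul_le _ _ _ _
      _ ≤ 1 / 2 * |aeval ξ A| + 1 / 2 * |aeval ξ B| := by gcongr
      _ < |aeval ξ A| := by linarith [h.abs_aeval_lt]
  have hBR := h.heightZ_le_of_abs_aeval_lt R hR0
    (natDegree_le_of_toR_eq h.natDegree_left_le h.natDegree_right_le hR) hev
  have hRAB : heightZ R ≤ 1 / 2 * heightZ A + 1 / 2 * heightZ B :=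
    (heightZ_le_of_toR_eq hR).trans (by gcongr <;> exact heightZ_nonneg _)
  linarith [h.heightZ_lt]

lemma exists_eq_zsmul_add_zsmul (h : IsMinimalPair n ξ A B) {Q : ℤ[X]}
    (hQ : toR Q ∈ Submodule.span ℝ ({toR A, toR B} : Set ℝ[X])) :
    ∃ a b : ℤ, Q = a • A + b • B := by
  obtain ⟨s, t, hst⟩ := Submodule.mem_span_pair.1 hQ
  refine ⟨round s, round t, sub_eq_zero.1 (h.eq_zero_of_toR_eq ?_ (abs_sub_round s)
    (abs_sub_round t))⟩
  simp only [toR, Polynomial.map_sub, Polynomial.map_add, Polynomial.map_smul, eq_intCast] at hst ⊢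
  rw [← hst]
  module

end IsMinimalPair

theorem minimal_pair_zbasis_general (n : ℕ) (ξ : ℝ)
    (P : ℕ → Polynomial ℤ) (hP : IsMinimalSeq n ξ P) (i : ℕ) :
    LinearIndependent ℝ ![toR (P i), toR (P (i + 1))] ∧
      ∀ Q : Polynomial ℤ,
        toR Q ∈ Submodule.span ℝ ({toR (P i), toR (P (i + 1))} : Set (Polynomial ℝ)) →
        ∃ a b : ℤ, Q = a • P i + b • P (i + 1) := by
  have h := hP.isMinimalPair i
  exact ⟨linearIndependent_toR_pair h.heightZ_lt h.abs_aeval_lt,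
    fun _ hQ => h.exists_eq_zsmul_add_zsmul hQ⟩

/-- `{P_i, P_{i+1}}` is a `ℤ`-basis of `V_i ∩ ℤ[X]_{≤ n}` where
`V_i = ⟨P_i, P_{i+1}⟩_ℝ`. -/
theorem minimal_pair_zbasis (n : ℕ) (hn : 1 ≤ n) (ξ : ℝ) (hξ : Transcendental ℚ ξ)
    (P : ℕ → Polynomial ℤ) (hP : IsMinimalSeq n ξ P) (i : ℕ) :
    LinearIndependent ℝ ![toR (P i), toR (P (i + 1))] ∧
      ∀ Q : Polynomial ℤ,
        toR Q ∈ Submodule.span ℝ ({toR (P i), toR (P (i + 1))} : Set (Polynomial ℝ)) →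
        ∃ a b : ℤ, Q = a • P i + b • P (i + 1) :=
  minimal_pair_zbasis_general n ξ P hP i
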